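/- arXiv:1703.02519 — 4 statements merged into one kernel-verified Lean document; each statement's English description precedes it below -/
import Mathlib

section
/- If f' is an injective co-inverse of f (f' ∘ f ∘ f' = f' and f' injective), then f' is a mutual inverse of the restriction f|_{Im(f')}, i.e., letting g = f restricted to the image of f', we have g ∘ f' ∘ g = g and f' ∘ g ∘ f' = f'. -/
/-- `f` is injective as a partial function. -/
def pInj {α : Type*} (f : α →. α) : Prop :=
  ∀ ⦃x₁ x₂ y : α⦄, y ∈ f x₁ → y ∈ f x₂ → x₁ = x₂

/-- Restriction of a partial function `f` to the set `Z`. -/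
def pRes {α : Type*} (f : α →. α) (Z : Set α) : α →. α :=
  fun x => ⟨x ∈ Z ∧ (f x).Dom, fun h => (f x).get h.2⟩

lemma mem_comp_aux {α : Type*} (f g : α →. α) (x y : α) :
    y ∈ f.comp g x ↔ ∃ b, b ∈ g x ∧ y ∈ f b := Part.mem_bind_iff

lemma mem_pRes {α : Type*} (f : α →. α) (Z : Set α) (x y : α) :
    y ∈ pRes f Z x ↔ x ∈ Z ∧ y ∈ f x := by
  simp only [pRes, Part.mem_mk_iff]
  constructor
  · rintro ⟨⟨hz, hd⟩, rfl⟩; exact ⟨hz, Part.get_mem hd⟩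
  · rintro ⟨hz, hy⟩
    have hd : (f x).Dom := Part.dom_iff_mem.mpr ⟨y, hy⟩
    exact ⟨⟨hz, hd⟩, Part.get_eq_of_mem hy hd⟩

/-- an injective co-inverse `f'` of `f` is a mutual inverse of
the restriction `g = f|_{Im(f')}`. -/
theorem injective_coinverse_is_mutual_inverse_of_restriction {α : Type*}
    (f f' : α →. α) (h : f'.comp (f.comp f') = f') (hinj : pInj f') :
    (pRes f f'.ran).comp (f'.comp (pRes f f'.ran)) = pRes f f'.ran ∧
    f'.comp ((pRes f f'.ran).comp f') = f' := by
  set g := pRes f f'.ran with hgdef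
  -- key lemma: y ∈ f' x → x ∈ g y
  have hkey : ∀ {x y : α}, y ∈ f' x → x ∈ g y := by
    intro x y hy
    have h2 : y ∈ (f'.comp (f.comp f')) x := by rw [h]; exact hy
    rw [PFun.comp_apply, PFun.comp_apply] at h2
    obtain ⟨b, hb, hyb⟩ := Part.mem_bind_iff.mp h2
    obtain ⟨a, ha, hba⟩ := Part.mem_bind_iff.mp hb
    have hay : a = y := Part.mem_unique ha hy
    have hbx : b = x := hinj hyb hy
    exact (mem_pRes f f'.ran y x).mpr ⟨⟨x, hy⟩, hbx ▸ hay ▸ hba⟩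
  constructor
  · apply PFun.ext
    intro x y
    simp only [mem_comp_aux]
    constructor
    · rintro ⟨b, ⟨a, ha, hb⟩, hy⟩
      -- a ∈ g x, b ∈ f' a, y ∈ g b; need y ∈ g x
      have hab : a ∈ g b := hkey hb
      have hya : y = a := Part.mem_unique hy hab
      exact hya ▸ ha
    · intro hy
      -- y ∈ g x
      obtain ⟨hxr, hyx⟩ := (mem_pRes f f'.ran x y).mp hy
      obtain ⟨w, hw⟩ := hxr
      have hwx : w ∈ g x := hkey hw
      have hwy : w = y := Part.mem_unique hwx hy
      exact ⟨x, ⟨y, hy, hwy ▸ hw⟩, hy⟩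
  · apply PFun.ext
    intro x y
    simp only [mem_comp_aux]
    constructor
    · rintro ⟨b, ⟨a, ha, hb⟩, hy⟩
      -- a ∈ f' x, b ∈ g a, y ∈ f' b
      have hxa : x ∈ g a := hkey ha
      have hbx : b = x := Part.mem_unique hb hxa
      exact hbx ▸ hy
    · intro hy
      exact ⟨x, ⟨y, hy, hkey hy⟩, hy⟩
end

section
/- Anti-homomorphic property of injective co-inverses: if f₁' is an injective co-inverse of f₁ (f₁' f₁ f₁' = f₁', f₁' injective) and f₂' is an injective co-inverse of f₂, then f₁' ∘ f₂' is an injective co-inverse of f₂ ∘ f₁, i.e., (f₁' ∘ f₂') ∘ (f₂ ∘ f₁) ∘ (f₁' ∘ f₂') = f₁' ∘ f₂'. -/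
theorem pfun_mem_bind_iff {α β : Type*} (f : α →. β) (p : Part α) (y : β) :
    y ∈ p.bind f ↔ ∃ a ∈ p, y ∈ f a :=
  Part.mem_bind_iff

/-- anti-homomorphic property of injective co-inverses: if
`fᵢ'` is an injective co-inverse of `fᵢ` (i = 1,2), then `f₁' ∘ f₂'` is an
injective co-inverse of `f₂ ∘ f₁`. -/
theorem coinverse_antihom {α : Type*} (f₁ f₁' f₂ f₂' : α →. α)
    (h₁ : f₁'.comp (f₁.comp f₁') = f₁') (hinj₁ : pInj f₁')
    (h₂ : f₂'.comp (f₂.comp f₂') = f₂') (hinj₂ : pInj f₂') :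
    (f₁'.comp f₂').comp ((f₂.comp f₁).comp (f₁'.comp f₂')) = f₁'.comp f₂' ∧
    pInj (f₁'.comp f₂') := by
  have key : ∀ (f f' : α →. α), f'.comp (f.comp f') = f' → pInj f' →
      ∀ ⦃a b : α⦄, b ∈ f' a → a ∈ f b := by
    intro f f' h hinj a b hb
    have hb' := hb
    rw [← h] at hb'
    simp only [PFun.comp_apply, Part.mem_bind_iff, pfun_mem_bind_iff] at hb'
    obtain ⟨q, ⟨p, hp, hq⟩, hbq⟩ := hb'
    obtain rfl : p = b := Part.mem_unique hp hb
    obtain rfl : q = a := hinj hbq hb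
    exact hq
  constructor
  · funext x
    ext y
    simp only [PFun.comp_apply, Part.mem_bind_iff, pfun_mem_bind_iff]
    constructor
    · rintro ⟨d, ⟨b, ⟨a, ha, hb⟩, c, hc, hd⟩, e, he, hy⟩
      obtain rfl : c = a := Part.mem_unique hc (key f₁ f₁' h₁ hinj₁ hb)
      obtain rfl : d = x := Part.mem_unique hd (key f₂ f₂' h₂ hinj₂ ha)
      exact ⟨e, he, hy⟩
    · rintro ⟨z, hz, hy⟩
      exact ⟨x, ⟨y, ⟨z, hz, hy⟩, z, key f₁ f₁' h₁ hinj₁ hy,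
        key f₂ f₂' h₂ hinj₂ hz⟩, z, hz, hy⟩
  · intro x₁ x₂ y hm₁ hm₂
    simp only [PFun.comp_apply, Part.mem_bind_iff, pfun_mem_bind_iff] at hm₁ hm₂
    obtain ⟨a₁, ha₁, hy₁⟩ := hm₁
    obtain ⟨a₂, ha₂, hy₂⟩ := hm₂
    obtain rfl := hinj₁ hy₁ hy₂
    exact hinj₂ ha₁ ha₂
end

section
/- For any partial function f, every injective co-inverse of f is an injective sub-inverse of f, and conversely: f' injective satisfies f' ∘ f ∘ f' = f' if and only if f' is a mutual inverse of some subfunction of f. -/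
/-- `g` is a subfunction of `f`. -/
def subFun {α : Type*} (g f : α →. α) : Prop :=
  ∀ x y, y ∈ g x → y ∈ f x

/-! An injective co-inverse `f'` of `f` is a mutual inverse of the restriction `g` of `f` to the
points `x` with `x ∈ f' (f x)`: in a chain `b ∈ f' a`, `c ∈ f b`, `y ∈ f' c` injectivity of `f'`
forces `c = a`, so `a ∈ g b`. Conversely, if `f' g f' = f'` with `g ⊆ f`, then `f' f f'` contains
`f' g f' = f'`, and a value `y` of `f' (f (f' a))` through `b ∈ f' a` satisfies `b ∈ f' (g b)`,
hence `b ∈ f' (f b)` and `y = b`. -/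

theorem PFun.mem_comp {α β γ : Type*} (f : β →. γ) (g : α →. β) (a : α) (c : γ) :
    c ∈ f.comp g a ↔ ∃ b ∈ g a, c ∈ f b := by
  rw [PFun.comp_apply]
  exact Part.mem_bind_iff

section

variable {α : Type*}

def IsCoinverse (f' f : α →. α) : Prop :=
  f'.comp (f.comp f') = f'

theorem isCoinverse_iff {f' f : α →. α} :
    IsCoinverse f' f ↔ ∀ a y, (∃ b ∈ f' a, ∃ c ∈ f b, y ∈ f' c) ↔ y ∈ f' a := by
  simp only [IsCoinverse, PFun.ext_iff, PFun.mem_comp]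
  exact forall₂_congr fun a y => iff_congr
    ⟨fun ⟨c, ⟨b, hb, hc⟩, hy⟩ => ⟨b, hb, c, hc, hy⟩, fun ⟨b, hb, c, hc, hy⟩ => ⟨c, ⟨b, hb, hc⟩, hy⟩⟩
    Iff.rfl

theorem IsCoinverse.of_subFun {f' f g : α →. α} (hg : IsCoinverse f' g) (hgf : subFun g f) :
    IsCoinverse f' f := by
  rw [isCoinverse_iff] at hg ⊢
  intro a y
  refine ⟨fun ⟨b, hb, c, hc, hy⟩ => ?_, fun hy => ?_⟩
  · obtain ⟨b', hb', c', hc', hbc'⟩ := (hg a b).2 hb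
    obtain rfl : b' = b := Part.mem_unique hb' hb
    obtain rfl : c' = c := Part.mem_unique (hgf _ _ hc') hc
    rwa [Part.mem_unique hy hbc']
  · obtain ⟨b, hb, c, hc, hy⟩ := (hg a y).2 hy
    exact ⟨b, hb, c, hgf _ _ hc, hy⟩

def invDom (f f' : α →. α) : Set α :=
  {x | ∃ y ∈ f x, x ∈ f' y}

theorem invDom_subset_dom (f f' : α →. α) : invDom f f' ⊆ f.Dom :=
  fun _ ⟨y, hy, _⟩ => Part.dom_iff_mem.2 ⟨y, hy⟩

theorem mem_restrict_invDom {f f' : α →. α} {x y : α} :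
    y ∈ f.restrict (invDom_subset_dom f f') x ↔ y ∈ f x ∧ x ∈ f' y := by
  rw [PFun.mem_restrict]
  refine ⟨fun ⟨⟨z, hz, hxz⟩, hy⟩ => ⟨hy, Part.mem_unique hz hy ▸ hxz⟩,
    fun ⟨hy, hxy⟩ => ⟨⟨y, hy, hxy⟩, hy⟩⟩

theorem subFun_restrict (f : α →. α) {s : Set α} (hs : s ⊆ f.Dom) : subFun (f.restrict hs) f :=
  fun _ _ hy => ((PFun.mem_restrict hs _ _).1 hy).2

theorem isCoinverse_restrict_invDom (f f' : α →. α) :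
    IsCoinverse (f.restrict (invDom_subset_dom f f')) f' := by
  rw [isCoinverse_iff]
  intro x w
  refine ⟨fun ⟨y, hy, z, hz, hw⟩ => ?_, fun hw => ?_⟩
  · obtain rfl : z = x := Part.mem_unique hz (mem_restrict_invDom.1 hy).2
    exact hw
  · exact ⟨w, hw, x, (mem_restrict_invDom.1 hw).2, hw⟩

theorem IsCoinverse.restrict_invDom {f f' : α →. α} (hinj : pInj f') (hco : IsCoinverse f' f) :
    IsCoinverse f' (f.restrict (invDom_subset_dom f f')) := by
  rw [isCoinverse_iff] at hco ⊢
  intro a y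
  refine ⟨fun ⟨b, hb, c, hc, hy⟩ => ?_, fun hy => ?_⟩
  · rwa [hinj hb (mem_restrict_invDom.1 hc).2]
  · obtain ⟨b, hb, c, hc, hyc⟩ := (hco a y).2 hy
    obtain rfl : c = a := hinj hyc hy
    exact ⟨b, hb, c, mem_restrict_invDom.2 ⟨hc, hb⟩, hyc⟩

end

/-- for injective `f'`, `f'` is a co-inverse of `f`
(`f' ∘ f ∘ f' = f'`) iff `f'` is a mutual inverse of some subfunction of `f`. -/
theorem injective_coinverse_iff_subinverse {α : Type*} (f f' : α →. α)
    (hinj : pInj f') :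
    f'.comp (f.comp f') = f' ↔
      ∃ g : α →. α, subFun g f ∧
        g.comp (f'.comp g) = g ∧ f'.comp (g.comp f') = f' :=
  ⟨fun hco => ⟨f.restrict (invDom_subset_dom f f'), subFun_restrict f _,
      isCoinverse_restrict_invDom f f', IsCoinverse.restrict_invDom hinj hco⟩,
    fun ⟨_, hgf, _, hg⟩ => IsCoinverse.of_subFun hg hgf⟩
end

section
/- Let f : α →. α be a partial function and define f₀ on tagged inputs by f₀(inl x) = inr (f x) for x ∈ Dom(f) (undefined elsewhere). If f' is any mutual inverse of f with Dom(f') = Im(f), then F' defined as the union of f₁' : inr y ↦ inl (f'(y)) and its set-theoretic inverse inl x ↦ inr ((f')⁻¹ x) is an involution (F' ∘ F' = id on its domain), F' = F'⁻¹, and F' is an inverse of f₀: f₀ ∘ F' ∘ f₀ = f₀. -/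
/-- `g` is the set-theoretic inverse of `f` (inverse relation, as a graph). -/
def isInvGraph {α : Type*} (g f : α →. α) : Prop :=
  ∀ x y, x ∈ g y ↔ y ∈ f x

/-- The identity partial function restricted to the set `Z`. -/
def pId {α : Type*} (Z : Set α) : α →. α :=
  fun x => ⟨x ∈ Z, fun _ => x⟩

/-- `f₀` on tagged inputs: `f₀(inl x) = inr (f x)`, undefined on `inr`. -/
def tagged {α : Type*} (f : α →. α) : α ⊕ α →. α ⊕ α :=
  fun z => match z with
    | Sum.inl x => (f x).map Sum.inr
    | Sum.inr _ => Part.none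

/-- `F'`: the union of `inr y ↦ inl (f' y)` and its set-theoretic inverse
`inl x ↦ inr ((f')⁻¹ x)`, where `g` is the inverse graph of `f'`. -/
def unionInv {α : Type*} (f' g : α →. α) : α ⊕ α →. α ⊕ α :=
  fun z => match z with
    | Sum.inr y => (f' y).map Sum.inl
    | Sum.inl x => (g x).map Sum.inr

theorem mem_comp_iff {α β γ : Type*} (f : β →. γ) (g : α →. β) (x : α) (y : γ) :
    y ∈ f.comp g x ↔ ∃ z, z ∈ g x ∧ y ∈ f z := by
  simp [PFun.comp_apply, Part.mem_bind_iff]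
  exact Part.mem_bind_iff

theorem mem_pId {α : Type*} (Z : Set α) (z w : α) :
    w ∈ pId Z z ↔ z ∈ Z ∧ z = w :=
  ⟨fun ⟨h, e⟩ => ⟨h, e⟩, fun ⟨h, e⟩ => ⟨h, e⟩⟩

/-- for a mutual inverse `f'` of `f` with `Dom(f') = Im(f)`,
the function `F' = f₁' ∪ (f₁')⁻¹` on the disjoint union is an involution on
its domain, equals its own set-theoretic inverse, and is an inverse of `f₀`. -/
theorem group_inverse_on_tagged {α : Type*} (f f' g : α →. α)
    (h₁ : f.comp (f'.comp f) = f) (h₂ : f'.comp (f.comp f') = f')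
    (hdom : f'.Dom = f.ran) (hg : isInvGraph g f') :
    (unionInv f' g).comp (unionInv f' g) = pId (unionInv f' g).Dom ∧
    isInvGraph (unionInv f' g) (unionInv f' g) ∧
    (tagged f).comp ((unionInv f' g).comp (tagged f)) = tagged f := by
  -- Key lemma: if a ∈ f' y then y ∈ f a.
  have L : ∀ a y, a ∈ f' y → y ∈ f a := by
    intro a y ha
    have hyd : y ∈ f'.Dom := Part.dom_iff_mem.mpr ⟨a, ha⟩
    rw [hdom] at hyd
    obtain ⟨u, hu⟩ := hyd
    have hu' : y ∈ (f.comp (f'.comp f)) u := by rw [h₁]; exact hu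
    rw [mem_comp_iff] at hu'
    obtain ⟨w, hw, hyw⟩ := hu'
    rw [mem_comp_iff] at hw
    obtain ⟨z, hz, hwz⟩ := hw
    have hzy : z = y := Part.mem_unique hz hu
    rw [hzy] at hwz
    have hwa : w = a := Part.mem_unique hwz ha
    rw [hwa] at hyw
    exact hyw
  -- f' is injective
  have inj : ∀ a y b, a ∈ f' y → a ∈ f' b → y = b := by
    intro a y b hy hb
    exact Part.mem_unique (L a y hy) (L a b hb)
  refine ⟨?_, ?_, ?_⟩
  · apply PFun.ext
    intro z w
    rw [mem_pId]
    cases z with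
    | inl x =>
      constructor
      · intro h
        rw [mem_comp_iff] at h
        obtain ⟨v, hv, hwv⟩ := h
        simp only [unionInv, Part.mem_map_iff] at hv
        obtain ⟨b, hb, rfl⟩ := hv
        simp only [unionInv, Part.mem_map_iff] at hwv
        obtain ⟨c, hc, rfl⟩ := hwv
        have hx : x ∈ f' b := (hg b x).mp hb
        have hcx : c = x := Part.mem_unique hc hx
        rw [hcx]
        refine ⟨?_, rfl⟩
        show (((unionInv f' g) (Sum.inl x))).Dom
        exact Part.dom_iff_mem.mpr ⟨Sum.inr b, (Part.mem_map_iff _).mpr ⟨b, hb, rfl⟩⟩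
      · rintro ⟨hd, rfl⟩
        have hd' : ((unionInv f' g) (Sum.inl x)).Dom := hd
        obtain ⟨v, hv⟩ := Part.dom_iff_mem.mp hd'
        obtain ⟨b, hb, rfl⟩ := (Part.mem_map_iff _).mp hv
        rw [mem_comp_iff]
        refine ⟨Sum.inr b, (Part.mem_map_iff _).mpr ⟨b, hb, rfl⟩, ?_⟩
        exact (Part.mem_map_iff _).mpr ⟨x, (hg b x).mp hb, rfl⟩
    | inr y =>
      constructor
      · intro h
        rw [mem_comp_iff] at h
        obtain ⟨v, hv, hwv⟩ := h
        simp only [unionInv, Part.mem_map_iff] at hv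
        obtain ⟨a, ha, rfl⟩ := hv
        simp only [unionInv, Part.mem_map_iff] at hwv
        obtain ⟨b, hb, rfl⟩ := hwv
        have hab : a ∈ f' b := (hg b a).mp hb
        have hby : b = y := inj a b y hab ha
        rw [hby]
        refine ⟨?_, rfl⟩
        show (((unionInv f' g) (Sum.inr y))).Dom
        exact Part.dom_iff_mem.mpr ⟨Sum.inl a, (Part.mem_map_iff _).mpr ⟨a, ha, rfl⟩⟩
      · rintro ⟨hd, rfl⟩
        have hd' : ((unionInv f' g) (Sum.inr y)).Dom := hd
        obtain ⟨v, hv⟩ := Part.dom_iff_mem.mp hd'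
        obtain ⟨a, ha, rfl⟩ := (Part.mem_map_iff _).mp hv
        rw [mem_comp_iff]
        refine ⟨Sum.inl a, (Part.mem_map_iff _).mpr ⟨a, ha, rfl⟩, ?_⟩
        exact (Part.mem_map_iff _).mpr ⟨y, (hg y a).mpr ha, rfl⟩
  · intro z w
    cases z with
    | inl x =>
      cases w with
      | inl x' => simp [unionInv, Part.mem_map_iff]
      | inr y =>
        simp only [unionInv, Part.mem_map_iff, Sum.inl.injEq, Sum.inr.injEq]
        constructor
        · rintro ⟨a, ha, h⟩
          exact ⟨y, (hg y x).mpr (h ▸ ha), rfl⟩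
        · rintro ⟨b, hb, h⟩
          exact ⟨x, (hg y x).mp (h ▸ hb), rfl⟩
    | inr y =>
      cases w with
      | inl x =>
        simp only [unionInv, Part.mem_map_iff, Sum.inl.injEq, Sum.inr.injEq]
        constructor
        · rintro ⟨a, ha, h⟩
          exact ⟨x, (hg y x).mp (h ▸ ha), rfl⟩
        · rintro ⟨b, hb, h⟩
          exact ⟨y, (hg y x).mpr (h ▸ hb), rfl⟩
      | inr y' => simp [unionInv, Part.mem_map_iff]
  · apply PFun.ext
    intro z w
    cases z with
    | inr y =>
      rw [mem_comp_iff]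
      constructor
      · rintro ⟨v, hv, -⟩
        rw [mem_comp_iff] at hv
        obtain ⟨u, hu, -⟩ := hv
        exact absurd hu (Part.notMem_none u)
      · intro h
        exact absurd h (Part.notMem_none w)
    | inl x =>
      constructor
      · intro h
        rw [mem_comp_iff] at h
        obtain ⟨v, hv, hwv⟩ := h
        rw [mem_comp_iff] at hv
        obtain ⟨u, hu, hvu⟩ := hv
        obtain ⟨b, hb, rfl⟩ := (Part.mem_map_iff _).mp hu
        obtain ⟨c, hc, rfl⟩ := (Part.mem_map_iff _).mp hvu
        obtain ⟨d, hd, rfl⟩ := (Part.mem_map_iff _).mp hwv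
        refine (Part.mem_map_iff _).mpr ⟨d, ?_, rfl⟩
        have hmem : d ∈ (f.comp (f'.comp f)) x := by
          rw [mem_comp_iff]
          refine ⟨c, ?_, hd⟩
          rw [mem_comp_iff]
          exact ⟨b, hb, hc⟩
        rwa [h₁] at hmem
      · intro h
        obtain ⟨b, hb, rfl⟩ := (Part.mem_map_iff _).mp h
        have hbd : b ∈ f'.Dom := by rw [hdom]; exact ⟨x, hb⟩
        obtain ⟨c, hc⟩ := Part.dom_iff_mem.mp hbd
        rw [mem_comp_iff]
        refine ⟨Sum.inl c, ?_, ?_⟩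
        · rw [mem_comp_iff]
          exact ⟨Sum.inr b, (Part.mem_map_iff _).mpr ⟨b, hb, rfl⟩,
            (Part.mem_map_iff _).mpr ⟨c, hc, rfl⟩⟩
        · exact (Part.mem_map_iff _).mpr ⟨b, L c b hc, rfl⟩
end
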